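/- Let d ≥ 1, let η_0, η₁, …, η_d ∈ G(n,k), let m₁, …, m_d > 0 with η_0 = Σ_{i=1}^d m_i • η_i, and let ε > 0. Then there exist η̃_0, η̃₁, …, η̃_d ∈ G(n,k), each of the form ‖M(B)‖⁻¹ • M(B) for some matrix B ∈ Matrix (Fin n) (Fin k) ℝ with rational entries and M(B) ≠ 0, such that ‖η̃_i − η_i‖ < ε/(2·d·m_i) for each i ∈ {1, …, d}, ‖η̃_0 − η_0‖ < ε/2, and the defect ζ := η̃_0 − Σ_{i=1}^d m_i • η̃_i satisfies ‖ζ‖ < ε. -/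

import Mathlib

/-!
Every point of `G(n,k)` is `M(A)` for an orthonormal frame `A`. The normalisation
`B ↦ ‖M(B)‖⁻¹ • M(B)` maps every `B` with `M(B) ≠ 0` into `G(n,k)`: writing `B = Q S` with
`Qᵀ Q = 1` and `det S > 0` (polar decomposition), `M(B) = det S • M(Q)`, and `‖M(Q)‖ = 1` by
Cauchy–Binet. This map is continuous at `A`, so rational matrices close to `A` give
rational-slope points close to `M(A)`. Approximating `η₀` within `ε/2` and each `ηᵢ` within
`ε/(2 d mᵢ)`, the defect is at most `‖η̃₀ - η₀‖ + Σ mᵢ ‖η̃ᵢ - ηᵢ‖ < ε/2 + d · ε/(2d)`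
because `η₀ = Σ mᵢ • ηᵢ`.
-/

open scoped BigOperators Matrix

/-- `Lam n k` : the `k`-element subsets of `Fin n` (the index set `Λ(n,k)`). -/
abbrev Lam (n k : ℕ) : Type := {s : Finset (Fin n) // s.card = k}

/-- The Plücker (minor) vector of a matrix `A : Matrix (Fin n) (Fin k) ℝ`:
`M(A)(λ)` is the determinant of the `k × k` submatrix of `A` formed by the rows
indexed by `λ`. -/
noncomputable def pluecker (n k : ℕ) (A : Matrix (Fin n) (Fin k) ℝ) :
    EuclideanSpace ℝ (Lam n k) :=
  WithLp.toLp 2 (fun lam : Lam n k => (A.submatrix (lam.1.orderEmbOfFin lam.2) id).det)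

/-- The Plücker model of the oriented Grassmannian `G(n,k)`. -/
def Grass (n k : ℕ) : Set (EuclideanSpace ℝ (Lam n k)) :=
  {x | ∃ A : Matrix (Fin n) (Fin k) ℝ, Aᵀ * A = 1 ∧ pluecker n k A = x}

/-- A unit simple k-vector with rational slope: the normalized Pluecker vector of a
matrix with rational entries and nonzero Pluecker vector. -/
def HasRationalSlope (n k : ℕ) (x : EuclideanSpace ℝ (Lam n k)) : Prop :=
  ∃ B : Matrix (Fin n) (Fin k) ℝ,
    (∀ i j, ∃ q : ℚ, B i j = (q : ℝ)) ∧
    pluecker n k B ≠ 0 ∧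
    x = ‖pluecker n k B‖⁻¹ • pluecker n k B


section CauchyBinet

open Finset Equiv

-- An injective `p` factors uniquely as the increasing enumeration of its image after a permutation.
theorem sum_injective_eq_sum_lam_perm {M : Type*} [AddCommMonoid M] {n k : ℕ}
    (f : (Fin k → Fin n) → M) :
    ∑ p with Function.Injective p, f p
      = ∑ lam : Lam n k, ∑ τ : Perm (Fin k), f (lam.1.orderEmbOfFin lam.2 ∘ τ) := by
  classical
  rw [← Fintype.sum_prod_type']
  symm
  refine sum_bij (fun x _ => x.1.1.orderEmbOfFin x.1.2 ∘ x.2) ?_ ?_ ?_ fun _ _ => rfl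
  · intro x _
    simpa using (x.1.1.orderEmbOfFin x.1.2).injective.comp x.2.injective
  · have himage : ∀ x : Lam n k × Perm (Fin k),
        univ.image (x.1.1.orderEmbOfFin x.1.2 ∘ x.2) = x.1.1 := by
      intro x
      rw [← image_image, image_univ_equiv, image_orderEmbOfFin_univ]
    intro x _ y _ hxy
    have hlam : x.1 = y.1 := Subtype.ext <| by rw [← himage x, ← himage y, hxy]
    refine Prod.ext hlam (Equiv.ext fun j => ?_)
    have := congrFun hxy j
    simp only [Function.comp_apply, hlam] at this
    exact (y.1.1.orderEmbOfFin y.1.2).injective this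
  · intro p hp
    have hp : Function.Injective p := (mem_filter.mp hp).2
    have hcard : (univ.image p).card = k := by simp [card_image_of_injective _ hp]
    set e := (univ.image p).orderIsoOfFin hcard
    let τ : Fin k → Fin k := fun j => e.symm ⟨p j, mem_image_of_mem p (mem_univ j)⟩
    have hτ : Function.Injective τ := fun i j hij => hp (by simpa [τ] using hij)
    refine ⟨(⟨univ.image p, hcard⟩, Equiv.ofBijective τ hτ.bijective_of_finite), mem_univ _, ?_⟩
    funext j
    simp [τ, e, ← coe_orderIsoOfFin_apply]

variable {R : Type*} [CommRing R] {n k : ℕ}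

theorem det_transpose_mul_eq_sum_fun (A B : Matrix (Fin n) (Fin k) R) :
    (Aᵀ * B).det = ∑ p : Fin k → Fin n, (A.submatrix p id).det * ∏ j, B (p j) j := by
  have hminor (p : Fin k → Fin n) :
      (A.submatrix p id).det = ∑ σ : Perm (Fin k), Perm.sign σ • ∏ j, A (p j) (σ j) := by
    rw [← Matrix.det_transpose, Matrix.det_apply]
    rfl
  simp only [hminor, Matrix.det_apply, Matrix.mul_apply, Matrix.transpose_apply, prod_univ_sum,
    smul_sum, Fintype.piFinset_univ, sum_mul, prod_mul_distrib, smul_mul_assoc]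
  exact sum_comm

theorem sum_perm_det_submatrix_mul_prod (A B : Matrix (Fin n) (Fin k) R) (lam : Lam n k) :
    ∑ τ : Perm (Fin k), (A.submatrix (lam.1.orderEmbOfFin lam.2 ∘ τ) id).det
        * ∏ j, B (lam.1.orderEmbOfFin lam.2 (τ j)) j
      = (A.submatrix (lam.1.orderEmbOfFin lam.2) id).det
        * (B.submatrix (lam.1.orderEmbOfFin lam.2) id).det := by
  rw [Matrix.det_apply' (B.submatrix _ id), mul_sum]
  refine sum_congr rfl fun τ _ => ?_
  have : A.submatrix (lam.1.orderEmbOfFin lam.2 ∘ τ) id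
      = (A.submatrix (lam.1.orderEmbOfFin lam.2) id).submatrix τ id := rfl
  rw [this, Matrix.det_permute]
  simp only [Matrix.submatrix_apply, id]
  ring

theorem det_transpose_mul_eq_sum_minors (A B : Matrix (Fin n) (Fin k) R) :
    (Aᵀ * B).det = ∑ lam : Lam n k, (A.submatrix (lam.1.orderEmbOfFin lam.2) id).det
        * (B.submatrix (lam.1.orderEmbOfFin lam.2) id).det := by
  have hvanish : ∀ p : Fin k → Fin n, ¬ Function.Injective p → (A.submatrix p id).det = 0 := by
    intro p hp
    obtain ⟨i, j, hpij, hij⟩ := Function.not_injective_iff.mp hp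
    exact Matrix.det_zero_of_row_eq hij (funext fun c => by simp [hpij])
  rw [det_transpose_mul_eq_sum_fun, ← sum_filter_of_ne (p := Function.Injective) fun p _ h => ?_,
    sum_injective_eq_sum_lam_perm]
  · exact sum_congr rfl fun lam _ => sum_perm_det_submatrix_mul_prod A B lam
  · by_contra hp
    exact h (by rw [hvanish p hp, zero_mul])

end CauchyBinet

theorem norm_pluecker_sq {n k : ℕ} (A : Matrix (Fin n) (Fin k) ℝ) :
    ‖pluecker n k A‖ ^ 2 = (Aᵀ * A).det := by
  rw [EuclideanSpace.norm_sq_eq, det_transpose_mul_eq_sum_minors]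
  simp [pluecker, sq]

theorem norm_pluecker_of_transpose_mul_self_eq_one {n k : ℕ} {A : Matrix (Fin n) (Fin k) ℝ}
    (hA : Aᵀ * A = 1) : ‖pluecker n k A‖ = 1 := by
  have h := norm_pluecker_sq A
  rwa [hA, Matrix.det_one, pow_eq_one_iff_of_nonneg (norm_nonneg _) two_ne_zero] at h

theorem pluecker_mul {n k : ℕ} (B : Matrix (Fin n) (Fin k) ℝ) (C : Matrix (Fin k) (Fin k) ℝ) :
    pluecker n k (B * C) = C.det • pluecker n k B := by
  ext lam
  simp [pluecker, Matrix.submatrix_mul _ _ _ id id Function.bijective_id, mul_comm]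

open scoped MatrixOrder in
theorem Matrix.exists_transpose_mul_self_eq_one_mul {m ι : Type*} [Fintype m] [Fintype ι]
    [DecidableEq ι] (B : Matrix m ι ℝ) (hB : (Bᵀ * B).det ≠ 0) :
    ∃ (Q : Matrix m ι ℝ) (S : Matrix ι ι ℝ), Qᵀ * Q = 1 ∧ 0 < S.det ∧ B = Q * S := by
  have hG : (Bᵀ * B).PosSemidef := by
    simpa [conjTranspose_eq_transpose_of_trivial] using posSemidef_conjTranspose_mul_self B
  set S := CFC.sqrt (Bᵀ * B)
  have hS : S.PosSemidef := nonneg_iff_posSemidef.mp (CFC.sqrt_nonneg _)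
  have hSS : S * S = Bᵀ * B := CFC.sqrt_mul_sqrt_self _ hG.nonneg
  have hSt : Sᵀ = S := by simpa [conjTranspose_eq_transpose_of_trivial] using hS.isHermitian.eq
  have hdet : 0 < S.det := by
    refine hS.det_nonneg.lt_of_ne fun h => hB ?_
    rw [← hSS, det_mul, ← h, zero_mul]
  have hunit : IsUnit S.det := hdet.ne'.isUnit
  refine ⟨B * S⁻¹, S, ?_, hdet, by rw [Matrix.mul_assoc, nonsing_inv_mul _ hunit, Matrix.mul_one]⟩
  rw [transpose_mul, transpose_nonsing_inv, hSt, Matrix.mul_assoc, ← Matrix.mul_assoc Bᵀ, ← hSS,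
    Matrix.mul_assoc S, mul_nonsing_inv _ hunit, Matrix.mul_one, nonsing_inv_mul _ hunit]

theorem normalize_pluecker_mem_grass {n k : ℕ} {B : Matrix (Fin n) (Fin k) ℝ}
    (hB : pluecker n k B ≠ 0) : ‖pluecker n k B‖⁻¹ • pluecker n k B ∈ Grass n k := by
  have hdet : (Bᵀ * B).det ≠ 0 := by
    rw [← norm_pluecker_sq]
    exact pow_ne_zero 2 (norm_ne_zero_iff.mpr hB)
  obtain ⟨Q, S, hQ, hS, rfl⟩ := B.exists_transpose_mul_self_eq_one_mul hdet
  refine ⟨Q, hQ, ?_⟩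
  rw [pluecker_mul, norm_smul, norm_pluecker_of_transpose_mul_self_eq_one hQ, mul_one,
    Real.norm_of_nonneg hS.le, smul_smul, inv_mul_cancel₀ hS.ne', one_smul]

theorem continuous_pluecker {n k : ℕ} : Continuous (pluecker n k) :=
  (PiLp.continuous_toLp 2 _).comp <|
    continuous_pi fun _ => (continuous_id.matrix_submatrix _ _).matrix_det

theorem Matrix.dense_setOf_forall_exists_ratCast {m ι : Type*} [Finite m] [Finite ι] :
    Dense {B : Matrix m ι ℝ | ∀ i j, ∃ q : ℚ, B i j = q} := by
  have hrow : Dense (Set.univ.pi fun _ : ι => Set.range ((↑) : ℚ → ℝ)) :=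
    dense_pi _ fun _ _ => Rat.denseRange_cast
  show Dense {B : m → ι → ℝ | ∀ i j, ∃ q : ℚ, B i j = q}
  convert dense_pi (Set.univ : Set m) fun _ _ => hrow using 1
  ext B
  simp [Set.mem_pi, eq_comm]

theorem exists_hasRationalSlope_near {n k : ℕ} {x : EuclideanSpace ℝ (Lam n k)}
    (hx : x ∈ Grass n k) {δ : ℝ} (hδ : 0 < δ) :
    ∃ y, HasRationalSlope n k y ∧ y ∈ Grass n k ∧ ‖y - x‖ < δ := by
  obtain ⟨A, hA, rfl⟩ := hx
  have hnorm : ‖pluecker n k A‖ = 1 := norm_pluecker_of_transpose_mul_self_eq_one hA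
  have hne : pluecker n k A ≠ 0 := norm_ne_zero_iff.mp (by rw [hnorm]; exact one_ne_zero)
  let normalize B := ‖pluecker n k B‖⁻¹ • pluecker n k B
  have hcont : ContinuousAt normalize A :=
    ((continuous_pluecker.norm.continuousAt).inv₀ (by rw [hnorm]; exact one_ne_zero)).smul
      continuous_pluecker.continuousAt
  have hA : normalize A = pluecker n k A := by simp [normalize, hnorm]
  have hnhds : {B | pluecker n k B ≠ 0} ∩ normalize ⁻¹' Metric.ball (pluecker n k A) δ ∈ nhds A :=
    Filter.inter_mem ((isOpen_compl_singleton.preimage continuous_pluecker).mem_nhds hne)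
      (hcont.preimage_mem_nhds (hA ▸ Metric.ball_mem_nhds _ hδ))
  obtain ⟨B, hBrat, hBne, hBball⟩ :=
    Matrix.dense_setOf_forall_exists_ratCast.inter_nhds_nonempty hnhds
  exact ⟨normalize B, ⟨B, hBrat, hBne, rfl⟩, normalize_pluecker_mem_grass hBne,
    mem_ball_iff_norm.mp hBball⟩

theorem norm_sub_sum_smul_le {E ι : Type*} [SeminormedAddCommGroup E] [NormedSpace ℝ E]
    [Fintype ι] {x₀ y₀ : E} {x y : ι → E} {m : ι → ℝ} (hx : x₀ = ∑ i, m i • x i) :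
    ‖y₀ - ∑ i, m i • y i‖ ≤ ‖y₀ - x₀‖ + ∑ i, |m i| * ‖y i - x i‖ := by
  have hsplit : y₀ - ∑ i, m i • y i = (y₀ - x₀) - ∑ i, m i • (y i - x i) := by
    simp only [hx, smul_sub, Finset.sum_sub_distrib]
    abel
  rw [hsplit]
  refine (norm_sub_le _ _).trans (add_le_add_right ((norm_sum_le _ _).trans ?_) _)
  simp [norm_smul]

theorem approx_combination_by_rational_slope_general (n k : ℕ)
    (d : ℕ)
    (η₀ : EuclideanSpace ℝ (Lam n k)) (η : Fin d → EuclideanSpace ℝ (Lam n k))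
    (hη₀ : η₀ ∈ Grass n k) (hη : ∀ i, η i ∈ Grass n k)
    (m : Fin d → ℝ) (hm : ∀ i, 0 < m i)
    (hsum : η₀ = ∑ i, m i • η i)
    (ε : ℝ) (hε : 0 < ε) :
    ∃ (ηt₀ : EuclideanSpace ℝ (Lam n k)) (ηt : Fin d → EuclideanSpace ℝ (Lam n k)),
      HasRationalSlope n k ηt₀ ∧ (∀ i, HasRationalSlope n k (ηt i)) ∧
      ηt₀ ∈ Grass n k ∧ (∀ i, ηt i ∈ Grass n k) ∧
      (∀ i, ‖ηt i - η i‖ < ε / (2 * d * m i)) ∧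
      ‖ηt₀ - η₀‖ < ε / 2 ∧
      ‖ηt₀ - ∑ i, m i • ηt i‖ < ε := by
  have hd (i : Fin d) : (0 : ℝ) < d := Nat.cast_pos.mpr i.pos
  obtain ⟨ηt₀, hrat₀, hgr₀, hclose₀⟩ := exists_hasRationalSlope_near hη₀ (half_pos hε)
  choose ηt hrat hgr hclose using fun i =>
    exists_hasRationalSlope_near (hη i) (δ := ε / (2 * d * m i))
      (by have := hd i; have := hm i; positivity)
  refine ⟨ηt₀, ηt, hrat₀, hrat, hgr₀, hgr, hclose, hclose₀, ?_⟩
  have hterm (i : Fin d) : |m i| * ‖ηt i - η i‖ ≤ ε / (2 * d) := by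
    rw [abs_of_pos (hm i)]
    calc m i * ‖ηt i - η i‖ ≤ m i * (ε / (2 * d * m i)) :=
        mul_le_mul_of_nonneg_left (hclose i).le (hm i).le
      _ = ε / (2 * d) := by field_simp [(hm i).ne', (hd i).ne']
  have hcount : ∑ _i : Fin d, ε / (2 * d) ≤ ε / 2 := by
    simpa [field] using div_self_le_one (d : ℝ)
  calc ‖ηt₀ - ∑ i, m i • ηt i‖ ≤ ‖ηt₀ - η₀‖ + ∑ i, |m i| * ‖ηt i - η i‖ :=
        norm_sub_sum_smul_le hsum
    _ < ε / 2 + ε / 2 :=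
        add_lt_add_of_lt_of_le hclose₀ ((Finset.sum_le_sum fun i _ => hterm i).trans hcount)
    _ = ε := add_halves ε

/-- a positive combination of Grassmannian points can be
approximated by one made of rational-slope points, with a small defect. -/
theorem approx_combination_by_rational_slope (n k : ℕ) (hk : 1 ≤ k) (hkn : k ≤ n)
    (d : ℕ) (hd : 1 ≤ d)
    (η₀ : EuclideanSpace ℝ (Lam n k)) (η : Fin d → EuclideanSpace ℝ (Lam n k))
    (hη₀ : η₀ ∈ Grass n k) (hη : ∀ i, η i ∈ Grass n k)
    (m : Fin d → ℝ) (hm : ∀ i, 0 < m i)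
    (hsum : η₀ = ∑ i, m i • η i)
    (ε : ℝ) (hε : 0 < ε) :
    ∃ (ηt₀ : EuclideanSpace ℝ (Lam n k)) (ηt : Fin d → EuclideanSpace ℝ (Lam n k)),
      HasRationalSlope n k ηt₀ ∧ (∀ i, HasRationalSlope n k (ηt i)) ∧
      ηt₀ ∈ Grass n k ∧ (∀ i, ηt i ∈ Grass n k) ∧
      (∀ i, ‖ηt i - η i‖ < ε / (2 * d * m i)) ∧
      ‖ηt₀ - η₀‖ < ε / 2 ∧
      ‖ηt₀ - ∑ i, m i • ηt i‖ < ε :=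
  approx_combination_by_rational_slope_general n k d η₀ η hη₀ hη m hm hsum ε hε
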